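/- arXiv:2605.28240 — 7 statements merged into one kernel-verified Lean document; each statement's English description precedes it below -/
import Mathlib

section
/- Let Z be a nonempty set, I a finite nonempty index set, and φ : I × Z → ℝ a family of functions such that the function z ↦ max_{i∈I} φ(i,z) is bounded above on Z. Let α > 0, Δ > 0 with α·Δ ≥ ln|I|, and set Δ' = α·Δ. Suppose z* ∈ Z satisfies ln(Σ_{i∈I} exp(α·φ(i,z*))) ≥ sup_{z∈Z} ln(Σ_{i∈I} exp(α·φ(i,z))) − Δ'. Then sup_{z∈Z} max_{i∈I} φ(i,z) ≤ max_{i∈I} φ(i,z*) + 2Δ. -/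
open Finset Real

theorem phimax_upper_bound
    {Z : Type*} [Nonempty Z] {I : Type*} [Fintype I] [Nonempty I]
    (φ : I → Z → ℝ)
    (hbdd : BddAbove (Set.range fun z => Finset.univ.sup' Finset.univ_nonempty (fun i => φ i z)))
    (α Δ : ℝ) (hα : 0 < α) (hΔ : 0 < Δ) (hαΔ : Real.log (Fintype.card I) ≤ α * Δ)
    (Δ' : ℝ) (hΔ' : Δ' = α * Δ)
    (zstar : Z)
    (hz : Real.log (∑ i : I, Real.exp (α * φ i zstar))
            ≥ (⨆ z : Z, Real.log (∑ i : I, Real.exp (α * φ i z))) - Δ') :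
    (⨆ z : Z, Finset.univ.sup' Finset.univ_nonempty (fun i => φ i z))
      ≤ Finset.univ.sup' Finset.univ_nonempty (fun i => φ i zstar) + 2 * Δ := by
  set M : Z → ℝ := fun z => Finset.univ.sup' Finset.univ_nonempty (fun i => φ i z) with hM
  set L : Z → ℝ := fun z => Real.log (∑ i : I, Real.exp (α * φ i z)) with hL
  have hsumpos : ∀ z : Z, 0 < ∑ i : I, Real.exp (α * φ i z) := fun z =>
    Finset.sum_pos (fun i _ => Real.exp_pos _) Finset.univ_nonempty
  -- lower bound: α * M z ≤ L z
  have hlow : ∀ z : Z, α * M z ≤ L z := by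
    intro z
    obtain ⟨i, _, hi⟩ := Finset.exists_mem_eq_sup' Finset.univ_nonempty (fun i => φ i z)
    have h1 : Real.exp (α * M z) ≤ ∑ j : I, Real.exp (α * φ j z) := by
      rw [hM]
      simp only
      rw [hi]
      exact Finset.single_le_sum (f := fun j => Real.exp (α * φ j z))
        (fun j _ => (Real.exp_pos _).le) (Finset.mem_univ i)
    calc α * M z = Real.log (Real.exp (α * M z)) := (Real.log_exp _).symm
      _ ≤ L z := Real.log_le_log (Real.exp_pos _) h1
  -- upper bound: L z ≤ α * M z + log card
  have hup : ∀ z : Z, L z ≤ α * M z + Real.log (Fintype.card I) := by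
    intro z
    have h1 : ∑ i : I, Real.exp (α * φ i z) ≤ (Fintype.card I : ℝ) * Real.exp (α * M z) := by
      calc ∑ i : I, Real.exp (α * φ i z) ≤ ∑ _i : I, Real.exp (α * M z) := by
            apply Finset.sum_le_sum
            intro i _
            exact Real.exp_le_exp.2 (mul_le_mul_of_nonneg_left
              (Finset.le_sup' (fun j => φ j z) (Finset.mem_univ i)) hα.le)
        _ = (Fintype.card I : ℝ) * Real.exp (α * M z) := by
            rw [Finset.sum_const, Finset.card_univ, nsmul_eq_mul]
    have hcard : (0 : ℝ) < Fintype.card I := by positivity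
    calc L z ≤ Real.log ((Fintype.card I : ℝ) * Real.exp (α * M z)) :=
          Real.log_le_log (hsumpos z) h1
      _ = Real.log (Fintype.card I) + α * M z := by
          rw [Real.log_mul (ne_of_gt hcard) (Real.exp_ne_zero _), Real.log_exp]
      _ = α * M z + Real.log (Fintype.card I) := by ring
  -- L is bounded above
  obtain ⟨C, hC⟩ := hbdd
  have hLbdd : BddAbove (Set.range L) := by
    refine ⟨α * C + Real.log (Fintype.card I), ?_⟩
    rintro _ ⟨z, rfl⟩
    have hMz : M z ≤ C := hC ⟨z, rfl⟩
    exact (hup z).trans (by gcongr)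
  -- main chain
  refine ciSup_le fun z => ?_
  have h1 : L z ≤ ⨆ z : Z, L z := le_ciSup hLbdd z
  have h2 : α * M z ≤ α * M zstar + 2 * (α * Δ) := by
    calc α * M z ≤ L z := hlow z
      _ ≤ (⨆ z : Z, L z) := h1
      _ ≤ L zstar + Δ' := by linarith [hz]
      _ ≤ α * M zstar + Real.log (Fintype.card I) + Δ' := by linarith [hup zstar]
      _ ≤ α * M zstar + 2 * (α * Δ) := by rw [hΔ']; linarith
  have := (mul_le_mul_iff_right₀ hα).1 (by linarith : α * M z ≤ α * (M zstar + 2 * Δ))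
  exact this
end

section
/- Let Z be a nonempty set, I a finite nonempty index set, and φ : I × Z → ℝ with z ↦ max_{i∈I} φ(i,z) bounded above on Z; write φ_U = sup_{z∈Z} max_{i∈I} φ(i,z). Let α > 0, Δ > 0 with α·Δ ≥ ln|I|, set Δ' = α·Δ, and suppose z* ∈ Z satisfies ln(Σ_{i∈I} exp(α·φ(i,z*))) ≥ sup_{z∈Z} ln(Σ_{i∈I} exp(α·φ(i,z))) − Δ'. Write φ_max = max_{i∈I} φ(i,z*). If φ_L ∈ ℝ satisfies φ_L ≤ φ_U and φ_max ≤ φ_L + Δ, then φ_U − 3Δ ≤ φ_L ≤ φ_U. -/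
open Finset Real

theorem termination_absolute_sandwich
    {Z : Type*} [Nonempty Z] {I : Type*} [Fintype I] [Nonempty I]
    (φ : I → Z → ℝ)
    (hbdd : BddAbove (Set.range fun z => Finset.univ.sup' Finset.univ_nonempty (fun i => φ i z)))
    (φU : ℝ)
    (hφU : φU = ⨆ z : Z, Finset.univ.sup' Finset.univ_nonempty (fun i => φ i z))
    (α Δ : ℝ) (hα : 0 < α) (hΔ : 0 < Δ) (hαΔ : Real.log (Fintype.card I) ≤ α * Δ)
    (Δ' : ℝ) (hΔ' : Δ' = α * Δ)
    (zstar : Z)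
    (hz : Real.log (∑ i : I, Real.exp (α * φ i zstar))
            ≥ (⨆ z : Z, Real.log (∑ i : I, Real.exp (α * φ i z))) - Δ')
    (φmax : ℝ)
    (hφmax : φmax = Finset.univ.sup' Finset.univ_nonempty (fun i => φ i zstar))
    (φL : ℝ) (hL : φL ≤ φU) (hterm : φmax ≤ φL + Δ) :
    φU - 3 * Δ ≤ φL ∧ φL ≤ φU := by
  refine ⟨?_, hL⟩
  set f : Z → ℝ := fun z => Finset.univ.sup' Finset.univ_nonempty (fun i => φ i z) with hf
  set g : Z → ℝ := fun z => Real.log (∑ i : I, Real.exp (α * φ i z)) with hg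
  have hsumpos : ∀ z : Z, 0 < ∑ i : I, Real.exp (α * φ i z) := fun z =>
    Finset.sum_pos (fun i _ => Real.exp_pos _) Finset.univ_nonempty
  -- lower bound: α * f z ≤ g z
  have hlow : ∀ z : Z, α * f z ≤ g z := by
    intro z
    obtain ⟨i, _, hi⟩ := Finset.exists_mem_eq_sup' Finset.univ_nonempty (fun i => φ i z)
    have h : Real.exp (α * φ i z) ≤ ∑ j : I, Real.exp (α * φ j z) :=
      Finset.single_le_sum (f := fun j => Real.exp (α * φ j z))
        (fun j _ => (Real.exp_pos _).le) (Finset.mem_univ i)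
    calc α * f z = Real.log (Real.exp (α * φ i z)) := by
          rw [Real.log_exp]; simp only [hf, hi]
      _ ≤ g z := Real.log_le_log (Real.exp_pos _) h
  -- upper bound: g z ≤ α * f z + log card
  have hup : ∀ z : Z, g z ≤ α * f z + Real.log (Fintype.card I) := by
    intro z
    have hsum : (∑ i : I, Real.exp (α * φ i z)) ≤ (Fintype.card I : ℝ) * Real.exp (α * f z) := by
      have := Finset.sum_le_card_nsmul Finset.univ (fun i => Real.exp (α * φ i z))
        (Real.exp (α * f z)) (fun i _ => Real.exp_le_exp.2 (mul_le_mul_of_nonneg_left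
          (Finset.le_sup' (fun j => φ j z) (Finset.mem_univ i)) hα.le))
      simpa [nsmul_eq_mul, Finset.card_univ] using this
    calc g z ≤ Real.log ((Fintype.card I : ℝ) * Real.exp (α * f z)) :=
          Real.log_le_log (hsumpos z) hsum
      _ = Real.log (Fintype.card I) + α * f z := by
          rw [Real.log_mul (by positivity) (Real.exp_ne_zero _), Real.log_exp]
      _ = α * f z + Real.log (Fintype.card I) := by ring
  have hfU : ∀ z : Z, f z ≤ φU := fun z => hφU ▸ le_ciSup hbdd z
  have hbddg : BddAbove (Set.range g) := by
    refine ⟨α * φU + Real.log (Fintype.card I), ?_⟩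
    rintro _ ⟨z, rfl⟩
    exact (hup z).trans (by nlinarith [hfU z])
  have hgsup : α * φU ≤ ⨆ z : Z, g z := by
    have h1 : φU ≤ (⨆ z : Z, g z) / α := by
      rw [hφU]
      refine ciSup_le fun z => ?_
      rw [le_div_iff₀ hα]
      calc f z * α = α * f z := by ring
        _ ≤ g z := hlow z
        _ ≤ ⨆ z : Z, g z := le_ciSup hbddg z
    calc α * φU ≤ α * ((⨆ z : Z, g z) / α) := by nlinarith
      _ = ⨆ z : Z, g z := by field_simp
  have hkey : α * φU - Δ' ≤ α * φmax + Real.log (Fintype.card I) := by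
    have := hz
    have h2 : g zstar ≤ α * φmax + Real.log (Fintype.card I) := by
      rw [hφmax]; exact hup zstar
    have h3 : (⨆ z : Z, g z) - Δ' ≤ g zstar := hz
    linarith
  -- so α φmax ≥ α φU - Δ' - log card ≥ α φU - 2αΔ, i.e. φmax ≥ φU - 2Δ
  have hmax : φU - 2 * Δ ≤ φmax := by
    have : α * (φU - 2 * Δ) ≤ α * φmax := by rw [hΔ'] at hkey; linarith
    exact le_of_mul_le_mul_left (by linarith) hα
  linarith
end

section
/- Let Z be a nonempty set, I a finite nonempty index set, and φ : I × Z → ℝ with z ↦ max_{i∈I} φ(i,z) bounded above on Z; write φ_U = sup_{z∈Z} max_{i∈I} φ(i,z). Let α > 0, Δ > 0 with α·Δ ≥ ln|I|, set Δ' = α·Δ, and suppose z* ∈ Z satisfies ln(Σ_{i∈I} exp(α·φ(i,z*))) ≥ sup_{z∈Z} ln(Σ_{i∈I} exp(α·φ(i,z))) − Δ'. Write φ_max = max_{i∈I} φ(i,z*). If δ ∈ (0,1) and φ_L ∈ ℝ satisfies φ_L ≤ φ_U and φ_max − φ_L ≤ δ·φ_max, then (1−δ)·φ_U − 2Δ ≤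 φ_L ≤ φ_U. -/
open Finset Real

theorem termination_relative_sandwich
    {Z : Type*} [Nonempty Z] {I : Type*} [Fintype I] [Nonempty I]
    (φ : I → Z → ℝ)
    (hbdd : BddAbove (Set.range fun z => Finset.univ.sup' Finset.univ_nonempty (fun i => φ i z)))
    (φU : ℝ)
    (hφU : φU = ⨆ z : Z, Finset.univ.sup' Finset.univ_nonempty (fun i => φ i z))
    (α Δ : ℝ) (hα : 0 < α) (hΔ : 0 < Δ) (hαΔ : Real.log (Fintype.card I) ≤ α * Δ)
    (Δ' : ℝ) (hΔ' : Δ' = α * Δ)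
    (zstar : Z)
    (hz : Real.log (∑ i : I, Real.exp (α * φ i zstar))
            ≥ (⨆ z : Z, Real.log (∑ i : I, Real.exp (α * φ i z))) - Δ')
    (φmax : ℝ)
    (hφmax : φmax = Finset.univ.sup' Finset.univ_nonempty (fun i => φ i zstar))
    (δ : ℝ) (hδ0 : 0 < δ) (hδ1 : δ < 1)
    (φL : ℝ) (hL : φL ≤ φU) (hterm : φmax - φL ≤ δ * φmax) :
    (1 - δ) * φU - 2 * Δ ≤ φL ∧ φL ≤ φU := by
  refine ⟨?_, hL⟩
  set M : Z → ℝ := fun z => Finset.univ.sup' Finset.univ_nonempty (fun i => φ i z) with hM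
  set f : Z → ℝ := fun z => Real.log (∑ i : I, Real.exp (α * φ i z)) with hf
  have hcard : (0 : ℝ) < (Fintype.card I : ℝ) := by
    exact_mod_cast Fintype.card_pos
  -- pointwise bounds
  have hsum_pos : ∀ z : Z, 0 < ∑ i : I, Real.exp (α * φ i z) := by
    intro z
    exact Finset.sum_pos (fun i _ => Real.exp_pos _) Finset.univ_nonempty
  have hlower : ∀ z : Z, α * M z ≤ f z := by
    intro z
    obtain ⟨i0, _, hi0⟩ := Finset.exists_mem_eq_sup' Finset.univ_nonempty (fun i => φ i z)
    have h1 : Real.exp (α * M z) ≤ ∑ i : I, Real.exp (α * φ i z) := by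
      have : Real.exp (α * M z) = Real.exp (α * φ i0 z) := by rw [hM]; simp [hi0]
      rw [this]
      exact Finset.single_le_sum (f := fun i => Real.exp (α * φ i z)) (fun i _ => (Real.exp_pos _).le) (Finset.mem_univ i0)
    calc α * M z = Real.log (Real.exp (α * M z)) := (Real.log_exp _).symm
      _ ≤ f z := Real.log_le_log (Real.exp_pos _) h1
  have hupper : ∀ z : Z, f z ≤ Real.log (Fintype.card I) + α * M z := by
    intro z
    have h1 : ∑ i : I, Real.exp (α * φ i z) ≤ (Fintype.card I : ℝ) * Real.exp (α * M z) := by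
      calc ∑ i : I, Real.exp (α * φ i z) ≤ ∑ _i : I, Real.exp (α * M z) := by
            apply Finset.sum_le_sum
            intro i _
            apply Real.exp_le_exp.2
            exact mul_le_mul_of_nonneg_left
              (Finset.le_sup' (fun i => φ i z) (Finset.mem_univ i)) hα.le
        _ = (Fintype.card I : ℝ) * Real.exp (α * M z) := by
            rw [Finset.sum_const, Finset.card_univ, nsmul_eq_mul]
    calc f z ≤ Real.log ((Fintype.card I : ℝ) * Real.exp (α * M z)) :=
          Real.log_le_log (hsum_pos z) h1
      _ = Real.log (Fintype.card I) + α * M z := by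
          rw [Real.log_mul (ne_of_gt hcard) (ne_of_gt (Real.exp_pos _)), Real.log_exp]
  have hMle : ∀ z : Z, M z ≤ φU := by
    intro z
    rw [hφU]
    exact le_ciSup hbdd z
  have hfbdd : BddAbove (Set.range f) := by
    refine ⟨Real.log (Fintype.card I) + α * φU, ?_⟩
    rintro x ⟨z, rfl⟩
    exact (hupper z).trans (by nlinarith [hMle z])
  -- sup f ≥ α * φU
  have hsupf : α * φU ≤ ⨆ z : Z, f z := by
    have h1 : φU ≤ (⨆ z : Z, f z) / α := by
      rw [hφU]
      apply ciSup_le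
      intro z
      rw [le_div_iff₀ hα]
      calc M z * α = α * M z := mul_comm _ _
        _ ≤ f z := hlower z
        _ ≤ ⨆ z : Z, f z := le_ciSup hfbdd z
    rw [le_div_iff₀ hα] at h1
    nlinarith
  -- chain
  have hchain : α * φmax ≥ α * φU - 2 * (α * Δ) := by
    have h1 : f zstar ≤ α * Δ + α * φmax := by
      rw [hφmax]
      exact (hupper zstar).trans (by linarith [hαΔ])
    have h2 : (⨆ z : Z, f z) - Δ' ≤ f zstar := hz
    rw [hΔ'] at h2
    linarith [hsupf]
  have hkey : φU - 2 * Δ ≤ φmax := by nlinarith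
  -- conclude
  have h3 : (1 - δ) * φmax ≤ φL := by linarith
  nlinarith [hkey, h3, hΔ]
end

section
/- Let I be a finite nonempty index set, α > 0, Δ > 0, and v : I → ℝ. Write v_max = max_{i∈I} v_i, let φ_L ∈ ℝ satisfy v_max ≥ φ_L + Δ, and define B = {i ∈ I : v_i > φ_L}. Then Σ_{i∈B} exp(α·v_i) / Σ_{i∈I} exp(α·v_i) ≥ 1/(1 + |I|·exp(−α·Δ)). -/
open Finset Real

theorem softmax_mass_ratio_bound
    {I : Type*} [Fintype I] [Nonempty I]
    (α Δ : ℝ) (hα : 0 < α) (hΔ : 0 < Δ)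
    (v : I → ℝ)
    (vmax : ℝ) (hvmax : vmax = Finset.univ.sup' Finset.univ_nonempty v)
    (φL : ℝ) (hgap : vmax ≥ φL + Δ)
    (B : Finset I) (hB : B = Finset.univ.filter (fun i => v i > φL)) :
    (∑ i ∈ B, Real.exp (α * v i)) / ∑ i : I, Real.exp (α * v i)
      ≥ 1 / (1 + (Fintype.card I : ℝ) * Real.exp (-(α * Δ))) := by
  classical
  set c : ℝ := (Fintype.card I : ℝ) * Real.exp (-(α * Δ)) with hc
  obtain ⟨i₀, -, hi₀⟩ := Finset.exists_mem_eq_sup' Finset.univ_nonempty v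
  have hvi₀ : v i₀ = vmax := by rw [hvmax, hi₀]
  have hi₀B : i₀ ∈ B := by
    rw [hB, Finset.mem_filter]
    refine ⟨Finset.mem_univ _, ?_⟩
    have : φL + Δ > φL := by linarith
    simp only [gt_iff_lt]; linarith [hvi₀]
  have hSB : Real.exp (α * vmax) ≤ ∑ i ∈ B, Real.exp (α * v i) := by
    have := Finset.single_le_sum (f := fun i => Real.exp (α * v i))
      (fun i _ => (Real.exp_pos _).le) hi₀B
    simpa [hvi₀] using this
  have hSBpos : 0 < ∑ i ∈ B, Real.exp (α * v i) :=
    lt_of_lt_of_le (Real.exp_pos _) hSB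
  -- complement bound
  have hcomp : ∑ i ∈ Bᶜ, Real.exp (α * v i) ≤ c * ∑ i ∈ B, Real.exp (α * v i) := by
    have h1 : ∑ i ∈ Bᶜ, Real.exp (α * v i)
        ≤ ∑ _i ∈ Bᶜ, Real.exp (α * vmax) * Real.exp (-(α * Δ)) := by
      apply Finset.sum_le_sum
      intro i hi
      rw [← Real.exp_add]
      apply Real.exp_le_exp.mpr
      have hvi : v i ≤ φL := by
        rw [hB] at hi
        simp only [Finset.compl_filter, Finset.mem_filter] at hi
        exact not_lt.mp hi.2
      have : α * v i ≤ α * φL := mul_le_mul_of_nonneg_left hvi hα.le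
      nlinarith
    have h2 : ∑ _i ∈ Bᶜ, Real.exp (α * vmax) * Real.exp (-(α * Δ))
        = (Bᶜ.card : ℝ) * (Real.exp (α * vmax) * Real.exp (-(α * Δ))) := by
      rw [Finset.sum_const, nsmul_eq_mul]
    have h3 : (Bᶜ.card : ℝ) ≤ (Fintype.card I : ℝ) := by
      exact_mod_cast Finset.card_le_univ _
    calc ∑ i ∈ Bᶜ, Real.exp (α * v i)
        ≤ (Bᶜ.card : ℝ) * (Real.exp (α * vmax) * Real.exp (-(α * Δ))) := by
          rw [← h2]; exact h1
      _ ≤ (Fintype.card I : ℝ) * (Real.exp (α * vmax) * Real.exp (-(α * Δ))) := by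
          apply mul_le_mul_of_nonneg_right h3
          positivity
      _ = c * Real.exp (α * vmax) := by rw [hc]; ring
      _ ≤ c * ∑ i ∈ B, Real.exp (α * v i) := by
          apply mul_le_mul_of_nonneg_left hSB
          positivity
  have hsplit : ∑ i : I, Real.exp (α * v i)
      = ∑ i ∈ B, Real.exp (α * v i) + ∑ i ∈ Bᶜ, Real.exp (α * v i) :=
    (Finset.sum_add_sum_compl B _).symm
  have hSpos : 0 < ∑ i : I, Real.exp (α * v i) :=
    Finset.sum_pos (fun i _ => Real.exp_pos _) Finset.univ_nonempty
  have hcpos : 0 < 1 + c := by positivity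
  rw [ge_iff_le, div_le_div_iff₀ hcpos hSpos, one_mul, hsplit]
  nlinarith [hcomp]
end

section
/- Let c* > 0, Φ* > 0, ξ > 0, and 0 < λ_lo < λ_hi < 1, and set Θ = c*·ξ/(Φ*·(λ_hi − λ_lo)). Let ĉ ∈ ℝ and Φ̂ ∈ ℝ satisfy ĉ ≥ c* and Φ̂ ≥ 0. If ĉ + Θ·Φ̂ ≤ c* + Θ·λ_hi·Φ*, then Φ̂ ≤ λ_hi·Φ* and ĉ ≤ c*·(1 + ξ·λ_hi/(λ_hi − λ_lo)). -/
theorem theta_choice_part_i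
    (cstar Φstar ξ lamlo lamhi : ℝ)
    (hc : 0 < cstar) (hΦ : 0 < Φstar) (hξ : 0 < ξ)
    (hlo : 0 < lamlo) (hlohi : lamlo < lamhi) (hhi : lamhi < 1)
    (Θ : ℝ) (hΘ : Θ = cstar * ξ / (Φstar * (lamhi - lamlo)))
    (chat Φhat : ℝ) (hchat : chat ≥ cstar) (hΦhat : Φhat ≥ 0)
    (hcase : chat + Θ * Φhat ≤ cstar + Θ * lamhi * Φstar) :
    Φhat ≤ lamhi * Φstar ∧ chat ≤ cstar * (1 + ξ * lamhi / (lamhi - lamlo)) := by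
  have hd : 0 < lamhi - lamlo := by linarith
  have hΘpos : 0 < Θ := by
    rw [hΘ]; positivity
  constructor
  · nlinarith [mul_nonneg hΘpos.le hΦhat]
  · have hΘΦ : Θ * lamhi * Φstar = cstar * (ξ * lamhi / (lamhi - lamlo)) := by
      rw [hΘ]; field_simp
    nlinarith [mul_nonneg hΘpos.le hΦhat]
end

section
/- Let P be a nonempty set, c : P → ℝ and Φ : P → ℝ functions with Φ(x) ≥ 0 for all x ∈ P. Let x* ∈ P, write c* = c(x*) and Φ* = Φ(x*), and assume c* > 0 and Φ* > 0. Let ξ > 0 and 0 < λ_lo < λ_hi < 1, and set Θ = c*·ξ/(Φ*·(λ_hi − λ_lo)). Suppose x̂ ∈ P minimizes c(x) + Θ·Φ(x) over P, and that c(x̂) + Θ·Φ(x̂) > c* + Θ·λ_hi·Φ*. Then there is no x ∈ P with Φ(x) ≤ λ_lo·Φ* and c(x) ≤ (1+ξ)·c*. -/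
theorem theta_choice_part_ii
    {P : Type*} [Nonempty P]
    (c Φ : P → ℝ) (hΦnn : ∀ x, 0 ≤ Φ x)
    (xstar : P) (cstar Φstar : ℝ)
    (hcstar : cstar = c xstar) (hΦstar : Φstar = Φ xstar)
    (hc : 0 < cstar) (hΦ : 0 < Φstar)
    (ξ lamlo lamhi : ℝ) (hξ : 0 < ξ)
    (hlo : 0 < lamlo) (hlohi : lamlo < lamhi) (hhi : lamhi < 1)
    (Θ : ℝ) (hΘ : Θ = cstar * ξ / (Φstar * (lamhi - lamlo)))
    (xhat : P) (hopt : ∀ x : P, c xhat + Θ * Φ xhat ≤ c x + Θ * Φ x)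
    (hcase : c xhat + Θ * Φ xhat > cstar + Θ * lamhi * Φstar) :
    ¬ ∃ x : P, Φ x ≤ lamlo * Φstar ∧ c x ≤ (1 + ξ) * cstar := by
  rintro ⟨x, h1, h2⟩
  have hdd : 0 < lamhi - lamlo := by linarith
  have hden : Φstar * (lamhi - lamlo) ≠ 0 := ne_of_gt (mul_pos hΦ hdd)
  have hkey : Θ * (lamhi - lamlo) * Φstar = cstar * ξ := by
    rw [hΘ, div_mul_eq_mul_div, div_mul_eq_mul_div, div_eq_iff hden]; ring
  have hΘpos : 0 < Θ := by
    rw [hΘ]; exact div_pos (mul_pos hc hξ) (mul_pos hΦ hdd)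
  have : c x + Θ * Φ x ≤ cstar + Θ * lamhi * Φstar := by
    have h3 : Θ * Φ x ≤ Θ * (lamlo * Φstar) :=
      mul_le_mul_of_nonneg_left h1 hΘpos.le
    nlinarith [hkey]
  linarith [hopt x]
end

section
/- Let I be a finite nonempty index set with n = |I|, let v : I → ℝ, write v_max = max_{i∈I} v_i, and let ξ ∈ (0,1), α > 0, and N ∈ ℝ with N > n. Assume α·ξ·v_max > 3·ln N. Define the softmax weights π_i = exp(α·v_i)/Σ_{j∈I} exp(α·v_j), and call i ∈ I major if v_i > (1−ξ)·v_max. Then Σ_{i major} π_i > 1 − 1/N². -/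
open Finset Real

theorem softmax_major_mass
    {I : Type*} [Fintype I] [Nonempty I]
    (n : ℕ) (hn : n = Fintype.card I)
    (v : I → ℝ)
    (vmax : ℝ) (hvmax : vmax = Finset.univ.sup' Finset.univ_nonempty v)
    (ξ α N : ℝ) (hξ0 : 0 < ξ) (hξ1 : ξ < 1) (hα : 0 < α) (hN : N > n)
    (hchoice : α * ξ * vmax > 3 * Real.log N)
    (p : I → ℝ)
    (hp : ∀ i, p i = Real.exp (α * v i) / ∑ j : I, Real.exp (α * v j)) :
    ∑ i ∈ Finset.univ.filter (fun i => v i > (1 - ξ) * vmax), p i > 1 - 1 / N ^ 2 := by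
  have hcard : 1 ≤ n := by rw [hn]; exact Fintype.card_pos
  have hN1 : (1:ℝ) < N := lt_of_le_of_lt (by exact_mod_cast hcard) hN
  have hN0 : (0:ℝ) < N := lt_trans one_pos hN1
  set S := ∑ j : I, Real.exp (α * v j) with hS
  have hSpos : 0 < S := Finset.sum_pos (fun i _ => Real.exp_pos _) Finset.univ_nonempty
  obtain ⟨i0, -, hi0⟩ := Finset.exists_mem_eq_sup' Finset.univ_nonempty v
  have hSmax : Real.exp (α * vmax) ≤ S := by
    rw [hvmax, hi0]
    exact Finset.single_le_sum (f := fun j => Real.exp (α * v j))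
      (fun i _ => (Real.exp_pos _).le) (Finset.mem_univ i0)
  have hsum1 : ∑ i : I, p i = 1 := by
    simp only [hp]
    rw [← Finset.sum_div, div_self hSpos.ne']
  have hsplit := Finset.sum_filter_add_sum_filter_not Finset.univ
    (fun i => v i > (1 - ξ) * vmax) p
  rw [hsum1] at hsplit
  -- bound the minor sum
  have hminor_term : ∀ i ∈ Finset.univ.filter (fun i => ¬ v i > (1 - ξ) * vmax),
      p i ≤ Real.exp (α * ((1 - ξ) * vmax)) / S := by
    intro i hi
    rw [Finset.mem_filter] at hi
    have hvi : v i ≤ (1 - ξ) * vmax := not_lt.mp hi.2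
    rw [hp]
    gcongr
  have hminor : ∑ i ∈ Finset.univ.filter (fun i => ¬ v i > (1 - ξ) * vmax), p i
      < 1 / N ^ 2 := by
    calc ∑ i ∈ Finset.univ.filter (fun i => ¬ v i > (1 - ξ) * vmax), p i
        ≤ (Finset.univ.filter (fun i => ¬ v i > (1 - ξ) * vmax)).card
            * (Real.exp (α * ((1 - ξ) * vmax)) / S) := by
          simpa using Finset.sum_le_card_nsmul _ _ _ hminor_term
      _ ≤ n * (Real.exp (α * ((1 - ξ) * vmax)) / S) := by
          apply mul_le_mul_of_nonneg_right _ (by positivity)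
          have : (Finset.univ.filter (fun i => ¬ v i > (1 - ξ) * vmax)).card
              ≤ Fintype.card I := Finset.card_filter_le _ _
          rw [hn]; exact_mod_cast this
      _ ≤ n * (Real.exp (α * ((1 - ξ) * vmax)) / Real.exp (α * vmax)) := by
          gcongr
      _ = n * Real.exp (-(α * ξ * vmax)) := by
          rw [← Real.exp_sub]; ring_nf
      _ < N * Real.exp (-(3 * Real.log N)) := by
          have h1 : Real.exp (-(α * ξ * vmax)) < Real.exp (-(3 * Real.log N)) :=
            Real.exp_lt_exp.mpr (by linarith)
          have h2 : (n:ℝ) * Real.exp (-(α * ξ * vmax))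
              < N * Real.exp (-(α * ξ * vmax)) := by
            apply mul_lt_mul_of_pos_right hN (Real.exp_pos _)
          calc (n:ℝ) * Real.exp (-(α * ξ * vmax))
              < N * Real.exp (-(α * ξ * vmax)) := h2
            _ < N * Real.exp (-(3 * Real.log N)) :=
                mul_lt_mul_of_pos_left h1 hN0
      _ = 1 / N ^ 2 := by
          rw [Real.exp_neg, show (3:ℝ) * Real.log N = Real.log N * 3 by ring]
          rw [Real.exp_mul, Real.exp_log hN0]
          rw [show ((3:ℝ)) = ((3:ℕ):ℝ) by norm_num, Real.rpow_natCast]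
          field_simp
  linarith
end
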